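/- For the massive Thirring soliton U_ω with ω ∈ (−1,1), the identity ∫_ℝ ( ω|U_ω|² + (i/2)(conj(U_ω) U_ω' − U_ω conj(U_ω)') ) dx = 2√(1−ω²) holds. -/

import Mathlib

/-!
Write `μ = √(1 - ω²)` and `U_ω = r · V` with the real amplitude `r = √2 μ / (ω + cosh 2μx)` and
`V = √(1 + ω) cosh μx - i √(1 - ω) sinh μx`. The real factor leaves `Im (conj U U')` equal to
`r² Im (conj V V') = -r² μ²`, and `|V|² = ω + cosh 2μx`, so the integrand is
`2μ² (ω cosh 2μx + 1) / (ω + cosh 2μx)²`. This is `2μ²` times the derivative of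
`s ↦ sinh s / (ω + cosh s)` at `s = 2μx`, a function with limits `∓1` at `∓∞`;
substituting `s = 2μx` gives `2μ² · 2 / (2μ) = 2μ`.
-/

open MeasureTheory

/-- The massive Thirring line soliton profile. -/
noncomputable def thirringSoliton (ω x : ℝ) : ℂ :=
  (↑(Real.sqrt 2 * Real.sqrt (1 - ω ^ 2)) : ℂ) *
    ((↑(Real.sqrt (1 + ω) * Real.cosh (Real.sqrt (1 - ω ^ 2) * x)) : ℂ)
      - Complex.I * (↑(Real.sqrt (1 - ω) * Real.sinh (Real.sqrt (1 - ω ^ 2) * x)) : ℂ)) /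
    (↑(ω + Real.cosh (2 * Real.sqrt (1 - ω ^ 2) * x)) : ℂ)

open Real Filter Topology ComplexConjugate

theorem Complex.I_div_two_mul_conj_mul_sub_mul_conj (z w : ℂ) :
    Complex.I / 2 * (conj z * w - z * conj w) = -((conj z * w).im : ℂ) := by
  apply Complex.ext <;> simp; ring

theorem Complex.im_conj_ofReal_mul_mul_add (r r' : ℝ) (v v' : ℂ) :
    (conj (r * v) * (r' * v + r * v')).im = r ^ 2 * (conj v * v').im := by
  simp only [map_mul, Complex.conj_ofReal, Complex.mul_im, Complex.add_re, Complex.add_im,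
    Complex.mul_re, Complex.ofReal_re, Complex.ofReal_im, Complex.conj_re, Complex.conj_im]
  ring

theorem integrable_inv_cosh : Integrable fun t : ℝ => (cosh t)⁻¹ := by
  refine (integrable_inv_one_add_sq.const_mul 4).mono' (by fun_prop) (.of_forall fun t => ?_)
  have hcosh : (1 + t ^ 2) / 4 ≤ cosh t := by
    rw [← cosh_abs, cosh_eq]
    nlinarith [quadratic_le_exp_of_nonneg (abs_nonneg t), exp_pos (-|t|), sq_abs t, abs_nonneg t]
  rw [norm_inv, norm_of_nonneg (cosh_pos t).le, ← div_eq_mul_inv,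
    inv_le_comm₀ (cosh_pos t) (by positivity), inv_div]
  exact hcosh

theorem tendsto_sinh_div_add_cosh_atTop {ω : ℝ} (hω : -1 < ω) :
    Tendsto (fun s => sinh s / (ω + cosh s)) atTop (𝓝 1) := by
  -- in the variable `E = exp (-s)` the quotient is a rational function, continuous at `E = 0`
  have hrat : Tendsto (fun E : ℝ => (1 - E ^ 2) / (1 + 2 * ω * E + E ^ 2)) (𝓝 0) (𝓝 1) := by
    have : ContinuousAt (fun E : ℝ => (1 - E ^ 2) / (1 + 2 * ω * E + E ^ 2)) 0 := by
      fun_prop (disch := norm_num)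
    simpa using this.tendsto
  refine (hrat.comp tendsto_exp_neg_atTop_nhds_zero).congr fun s => ?_
  have hD : 0 < ω + cosh s := by linarith [one_le_cosh s]
  have hexp : exp s * exp (-s) = 1 := by rw [← exp_add, add_neg_cancel, exp_zero]
  have hden : 1 + 2 * ω * exp (-s) + exp (-s) ^ 2 = 2 * exp (-s) * (ω + cosh s) := by
    rw [cosh_eq]; linear_combination -hexp
  rw [Function.comp_apply, hden, div_eq_div_iff (by positivity) hD.ne', sinh_eq]
  linear_combination (-(ω + cosh s)) * hexp

theorem tendsto_sinh_div_add_cosh_atBot {ω : ℝ} (hω : -1 < ω) :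
    Tendsto (fun s => sinh s / (ω + cosh s)) atBot (𝓝 (-1)) := by
  have := ((tendsto_sinh_div_add_cosh_atTop hω).comp tendsto_neg_atBot_atTop).neg
  simpa [Function.comp_def, neg_div] using this

theorem hasDerivAt_sinh_div_add_cosh {ω : ℝ} (hω : -1 < ω) (s : ℝ) :
    HasDerivAt (fun s => sinh s / (ω + cosh s)) ((ω * cosh s + 1) / (ω + cosh s) ^ 2) s := by
  have hD : ω + cosh s ≠ 0 := by linarith [one_le_cosh s]
  refine ((hasDerivAt_sinh s).div ((hasDerivAt_cosh s).const_add ω) hD).congr_deriv ?_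
  rw [div_left_inj' (pow_ne_zero 2 hD)]
  linear_combination cosh_sq_sub_sinh_sq s

theorem integrable_deriv_sinh_div_add_cosh {ω : ℝ} (hω : -1 < ω) :
    Integrable fun s => (ω * cosh s + 1) / (ω + cosh s) ^ 2 := by
  set c := min 1 (1 + ω)
  have hc : 0 < c := lt_min one_pos (by linarith)
  refine (integrable_inv_cosh.const_mul ((|ω| + 1) / c ^ 2)).mono' ?_ (.of_forall fun s => ?_)
  · have : Continuous fun s => (ω * cosh s + 1) / (ω + cosh s) ^ 2 := by
      fun_prop (disch := intro s; nlinarith [one_le_cosh s])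
    exact this.aestronglyMeasurable
  · have hcosh := one_le_cosh s
    have hch := cosh_pos s
    have hD : c * cosh s ≤ ω + cosh s := by
      rcases le_total 0 ω with hω | hω
      · nlinarith [min_le_left 1 (1 + ω)]
      · nlinarith [min_le_right 1 (1 + ω)]
    have hnum : |ω * cosh s + 1| ≤ (|ω| + 1) * cosh s := by
      rw [abs_le]; constructor <;> nlinarith [abs_nonneg ω, le_abs_self ω, neg_abs_le ω]
    rw [norm_div, norm_pow, Real.norm_eq_abs, Real.norm_eq_abs, sq_abs]
    calc |ω * cosh s + 1| / (ω + cosh s) ^ 2 ≤ (|ω| + 1) * cosh s / (c * cosh s) ^ 2 :=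
          div_le_div₀ (by positivity) hnum (by positivity) (pow_le_pow_left₀ (by positivity) hD 2)
      _ = (|ω| + 1) / c ^ 2 * (cosh s)⁻¹ := by field_simp

theorem integral_deriv_sinh_div_add_cosh {ω : ℝ} (hω : -1 < ω) :
    ∫ s, (ω * cosh s + 1) / (ω + cosh s) ^ 2 = 2 := by
  rw [integral_of_hasDerivAt_of_tendsto (hasDerivAt_sinh_div_add_cosh hω)
    (integrable_deriv_sinh_div_add_cosh hω) (tendsto_sinh_div_add_cosh_atBot hω)
    (tendsto_sinh_div_add_cosh_atTop hω)]
  norm_num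

namespace thirringSoliton

noncomputable def amplitude (ω x : ℝ) : ℝ :=
  √2 * √(1 - ω ^ 2) / (ω + cosh (2 * √(1 - ω ^ 2) * x))

noncomputable def numerator (ω x : ℝ) : ℂ :=
  ↑(√(1 + ω) * cosh (√(1 - ω ^ 2) * x)) - Complex.I * ↑(√(1 - ω) * sinh (√(1 - ω ^ 2) * x))

noncomputable def numeratorDeriv (ω x : ℝ) : ℂ :=
  ↑(√(1 - ω ^ 2) * (√(1 + ω) * sinh (√(1 - ω ^ 2) * x)))
    - Complex.I * ↑(√(1 - ω ^ 2) * (√(1 - ω) * cosh (√(1 - ω ^ 2) * x)))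

variable {ω : ℝ}

theorem eq_amplitude_mul_numerator :
    thirringSoliton ω = fun x => ↑(amplitude ω x) * numerator ω x := by
  ext x
  simp only [thirringSoliton, amplitude, numerator]
  push_cast
  ring

theorem hasDerivAt_numerator (x : ℝ) : HasDerivAt (numerator ω) (numeratorDeriv ω x) x := by
  have hlin := (hasDerivAt_id x).const_mul √(1 - ω ^ 2)
  simp only [mul_one, id] at hlin
  exact ((hlin.cosh.const_mul _).ofReal_comp.sub
    ((hlin.sinh.const_mul _).ofReal_comp.const_mul Complex.I)).congr_deriv (by
      simp only [numeratorDeriv]; push_cast; ring)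

theorem differentiableAt_amplitude (hω : -1 < ω) (x : ℝ) :
    DifferentiableAt ℝ (amplitude ω) x := by
  have : ω + cosh (2 * √(1 - ω ^ 2) * x) ≠ 0 := by
    linarith [one_le_cosh (2 * √(1 - ω ^ 2) * x)]
  unfold amplitude
  fun_prop (disch := exact this)

theorem deriv_eq (hω : -1 < ω) (x : ℝ) :
    deriv (thirringSoliton ω) x =
      ↑(deriv (amplitude ω) x) * numerator ω x + ↑(amplitude ω x) * numeratorDeriv ω x := by
  rw [eq_amplitude_mul_numerator]
  exact ((differentiableAt_amplitude hω x).hasDerivAt.ofReal_comp.mul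
    (hasDerivAt_numerator x)).deriv

theorem norm_numerator_sq (hω : ω ∈ Set.Icc (-1) 1) (x : ℝ) :
    ‖numerator ω x‖ ^ 2 = ω + cosh (2 * √(1 - ω ^ 2) * x) := by
  have ha : √(1 + ω) ^ 2 = 1 + ω := sq_sqrt (by linarith [hω.1])
  have hb : √(1 - ω) ^ 2 = 1 - ω := sq_sqrt (by linarith [hω.2])
  rw [Complex.sq_norm, numerator, Complex.normSq_apply]
  simp only [Complex.sub_re, Complex.sub_im, Complex.mul_re, Complex.mul_im, Complex.I_re,
    Complex.I_im, Complex.ofReal_re, Complex.ofReal_im]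
  rw [mul_assoc 2, cosh_two_mul]
  linear_combination cosh (√(1 - ω ^ 2) * x) ^ 2 * ha + sinh (√(1 - ω ^ 2) * x) ^ 2 * hb
    + ω * cosh_sq_sub_sinh_sq (√(1 - ω ^ 2) * x)

theorem im_conj_numerator_mul_numeratorDeriv (hω : ω ∈ Set.Icc (-1) 1) (x : ℝ) :
    (conj (numerator ω x) * numeratorDeriv ω x).im = -(1 - ω ^ 2) := by
  have hab : √(1 + ω) * √(1 - ω) = √(1 - ω ^ 2) := by
    rw [← sqrt_mul (by linarith [hω.1])]; ring_nf
  have hμ : √(1 - ω ^ 2) ^ 2 = 1 - ω ^ 2 := sq_sqrt (by nlinarith [hω.1, hω.2])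
  simp only [numerator, numeratorDeriv, map_sub, map_mul, Complex.conj_ofReal, Complex.conj_I,
    Complex.mul_im, Complex.sub_re, Complex.sub_im, Complex.mul_re, Complex.neg_re,
    Complex.neg_im, Complex.I_re, Complex.I_im, Complex.ofReal_re, Complex.ofReal_im]
  linear_combination
    -(√(1 - ω ^ 2) * (√(1 + ω) * √(1 - ω))) * cosh_sq_sub_sinh_sq (√(1 - ω ^ 2) * x)
      - √(1 - ω ^ 2) * hab - hμ

theorem momentumDensity_eq (hω : ω ∈ Set.Ioo (-1) 1) (x : ℝ) :
    (ω : ℂ) * (↑‖thirringSoliton ω x‖ : ℂ) ^ 2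
        + Complex.I / 2 * (conj (thirringSoliton ω x) * deriv (thirringSoliton ω) x
          - thirringSoliton ω x * conj (deriv (thirringSoliton ω) x))
      = ((2 * (1 - ω ^ 2) * ((ω * cosh (2 * √(1 - ω ^ 2) * x) + 1)
          / (ω + cosh (2 * √(1 - ω ^ 2) * x)) ^ 2) : ℝ) : ℂ) := by
  have hIcc := Set.Ioo_subset_Icc_self hω
  rw [Complex.I_div_two_mul_conj_mul_sub_mul_conj, deriv_eq hω.1, eq_amplitude_mul_numerator,
    Complex.im_conj_ofReal_mul_mul_add, im_conj_numerator_mul_numeratorDeriv hIcc, norm_mul,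
    Complex.norm_real, Real.norm_eq_abs, ← Complex.ofReal_pow, mul_pow, sq_abs,
    norm_numerator_sq hIcc]
  norm_cast
  have hD : ω + cosh (2 * √(1 - ω ^ 2) * x) ≠ 0 := by
    linarith [one_le_cosh (2 * √(1 - ω ^ 2) * x), hω.1]
  rw [amplitude, div_pow, mul_pow, sq_sqrt zero_le_two, sq_sqrt (by nlinarith [hω.1, hω.2])]
  field_simp
  ring

end thirringSoliton

theorem thirringSoliton_momentum_integral (ω : ℝ) (hω : ω ∈ Set.Ioo (-1 : ℝ) 1) :
    ∫ x : ℝ, ((ω : ℂ) * (↑‖thirringSoliton ω x‖ : ℂ) ^ 2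
        + Complex.I / 2 * ((starRingEnd ℂ) (thirringSoliton ω x) * deriv (thirringSoliton ω) x
            - thirringSoliton ω x * (starRingEnd ℂ) (deriv (thirringSoliton ω) x)))
      = (↑(2 * Real.sqrt (1 - ω ^ 2)) : ℂ) := by
  have hμ : 0 < √(1 - ω ^ 2) := sqrt_pos.2 (by nlinarith [hω.1, hω.2])
  simp_rw [thirringSoliton.momentumDensity_eq hω]
  rw [integral_complex_ofReal, integral_const_mul,
    Measure.integral_comp_mul_left (fun s => (ω * cosh s + 1) / (ω + cosh s) ^ 2),
    integral_deriv_sinh_div_add_cosh hω.1, smul_eq_mul, abs_of_pos (by positivity)]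
  congr 1
  field_simp
  linear_combination -sq_sqrt (by nlinarith [hω.1, hω.2] : (0 : ℝ) ≤ 1 - ω ^ 2)
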